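/- Pushing forward an empirical model along a family of measurable outcome translations does not decrease the noncontextual fraction: if e' is obtained from e via measurable maps t_x : O_x → O'_x, then NCF(e') ≥ NCF(e), i.e., CF(e') ≤ CF(e). -/

import Mathlib

/-!
A noncontextual subprobability `μ` on global outcomes whose context marginals lie below `e`
pushes forward, along the outcome translation applied coordinatewise, to one whose marginals lie
below the translated model: translating outcomes commutes with restricting to a context, and
pushforward is monotone. Pushforward preserves total mass, so every weight attained for `e` is
attained for the translated model.
-/

open MeasureTheory
open scoped ENNReal

/-- The projection from the global outcome space onto the outcomes of a context `C`. -/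
def proj {X : Type*} {O : X → Type*} (C : Set X) (g : ∀ x, O x) : ∀ x : C, O x :=
  fun x => g x

/-- The noncontextual fraction. -/
noncomputable def NCF {G : Type*} [MeasurableSpace G] {I : Type*} (M : Finset I)
    {Gc : I → Type*} [∀ i, MeasurableSpace (Gc i)] (π : ∀ i, G → Gc i)
    (e : ∀ i, Measure (Gc i)) : ℝ≥0∞ :=
  sSup { r | ∃ μ : Measure G, (∀ i ∈ M, μ.map (π i) ≤ e i) ∧ r = μ Set.univ }

theorem NCF_le_NCF_map {G G' : Type*} [MeasurableSpace G] [MeasurableSpace G'] {I : Type*}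
    (M : Finset I) {Gc Gc' : I → Type*} [∀ i, MeasurableSpace (Gc i)]
    [∀ i, MeasurableSpace (Gc' i)] {π : ∀ i, G → Gc i} {π' : ∀ i, G' → Gc' i}
    (hπ : ∀ i ∈ M, Measurable (π i)) (hπ' : ∀ i ∈ M, Measurable (π' i))
    {T : G → G'} (hT : Measurable T) {τ : ∀ i, Gc i → Gc' i} (hτ : ∀ i ∈ M, Measurable (τ i))
    (hcomm : ∀ i ∈ M, π' i ∘ T = τ i ∘ π i) (e : ∀ i, Measure (Gc i)) :
    NCF M π e ≤ NCF M π' (fun i => (e i).map (τ i)) := by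
  refine sSup_le_sSup ?_
  rintro _ ⟨μ, hμ, rfl⟩
  refine ⟨μ.map T, fun i hi => ?_, (Measure.map_apply hT MeasurableSet.univ).symm⟩
  calc (μ.map T).map (π' i) = (μ.map (π i)).map (τ i) := by
        rw [Measure.map_map (hπ' i hi) hT, Measure.map_map (hτ i hi) (hπ i hi), hcomm i hi]
    _ ≤ (e i).map (τ i) := Measure.map_mono (hμ i hi) (hτ i hi)

theorem measurable_proj {X : Type*} {O : X → Type*} [∀ x, MeasurableSpace (O x)] (C : Set X) :
    Measurable (proj C (O := O)) :=
  measurable_pi_lambda _ fun x => measurable_pi_apply (x : X)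

theorem measurable_pi_map {ι : Type*} {O O' : ι → Type*} [∀ i, MeasurableSpace (O i)]
    [∀ i, MeasurableSpace (O' i)] {t : ∀ i, O i → O' i} (ht : ∀ i, Measurable (t i)) :
    Measurable (fun (g : ∀ i, O i) i => t i (g i)) :=
  measurable_pi_lambda _ fun i => (ht i).comp (measurable_pi_apply i)

theorem ncf_le_ncf_pushforward_general {X : Type*} {O O' : X → Type*}
    [∀ x, MeasurableSpace (O x)] [∀ x, MeasurableSpace (O' x)]
    (M : Finset (Set X))
    (e : ∀ C : Set X, Measure (∀ x : C, O x))
    (t : ∀ x, O x → O' x) (ht : ∀ x, Measurable (t x)) :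
    NCF M (fun C : Set X => proj C (O := O)) e ≤
      NCF M (fun C : Set X => proj C (O := O'))
        (fun C => (e C).map (fun g (x : C) => t x (g x))) ∧
    1 - NCF M (fun C : Set X => proj C (O := O'))
        (fun C => (e C).map (fun g (x : C) => t x (g x))) ≤
      1 - NCF M (fun C : Set X => proj C (O := O)) e := by
  have hle := NCF_le_NCF_map M (fun C _ => measurable_proj C) (fun C _ => measurable_proj C)
    (measurable_pi_map ht) (fun C _ => measurable_pi_map fun x : C => ht x)
    (fun _ _ => rfl) e
  exact ⟨hle, tsub_le_tsub_left hle 1⟩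

/-- pushing forward an empirical model along a family of measurable
outcome translations `t x : O x → O' x` does not decrease the noncontextual fraction:
`NCF e' ≥ NCF e`, i.e. `CF e' ≤ CF e`. -/
theorem ncf_le_ncf_pushforward {X : Type*} [Fintype X] {O O' : X → Type*}
    [∀ x, MeasurableSpace (O x)] [∀ x, MeasurableSpace (O' x)]
    (M : Finset (Set X))
    (e : ∀ C : Set X, Measure (∀ x : C, O x))
    (he : ∀ C ∈ M, IsProbabilityMeasure (e C))
    (t : ∀ x, O x → O' x) (ht : ∀ x, Measurable (t x)) :
    NCF M (fun C : Set X => proj C (O := O)) e ≤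
      NCF M (fun C : Set X => proj C (O := O'))
        (fun C => (e C).map (fun g (x : C) => t x (g x))) ∧
    1 - NCF M (fun C : Set X => proj C (O := O'))
        (fun C => (e C).map (fun g (x : C) => t x (g x))) ≤
      1 - NCF M (fun C : Set X => proj C (O := O)) e :=
  ncf_le_ncf_pushforward_general M e t ht
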